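/- Let (Φ(t))_{t∈ℕ} be matrices satisfying: each |Φ(t)| is super-stochastic with all row sums at most l and diagonal entries at least σ, where 0 < σ ≤ 1 ≤ l. Suppose there exist a period T and a constant bound such that ‖|Φ(γT+T−1)|···|Φ(γT)|‖_∞ ≤ l^T − σ^T for all γ ∈ ℕ, and l^T − σ^T < 1. Then the left infinite product Φ(t)···Φ(0) converges to the zero matrix. -/

import Mathlib

open Filter Topology

/-- Left partial products: `lprod Φ t = Φ(t−1) ⋯ Φ(1) Φ(0)` (and `lprod Φ 0 = I`). -/
def lprod {n : ℕ} (Φ : ℕ → Matrix (Fin n) (Fin n) ℝ) : ℕ → Matrix (Fin n) (Fin n) ℝ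
  | 0 => 1
  | t + 1 => Φ t * lprod Φ t

/-- Entrywise absolute value of a matrix. -/
def aabs {n : ℕ} (A : Matrix (Fin n) (Fin n) ℝ) : Matrix (Fin n) (Fin n) ℝ :=
  Matrix.of fun i j => |A i j|

/-- Infinity norm: maximum (absolute) row sum. -/
noncomputable def infNorm {n : ℕ} (A : Matrix (Fin n) (Fin n) ℝ) : ℝ :=
  ⨆ i : Fin n, ∑ j, |A i j|

/-!
In the ∞-operator norm `‖A‖ = maxᵢ ∑ⱼ |Aᵢⱼ|`, which is submultiplicative and equals `infNorm`,
we have `|Φ(t-1)⋯Φ(0)|ᵢⱼ ≤ ‖|Φ(t-1)|⋯|Φ(0)|‖`. Writing `t = r + γT` with `r < T`, the product of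
the `|Φ(s)|` splits into a remainder of norm at most `l^r ≤ l^T` and `γ` full blocks of norm at most
`q = l^T - σ^T < 1` each, so every entry is bounded by `l^T q^γ → 0`.
-/

attribute [local instance] Matrix.linftyOpNormedAddCommGroup

namespace Matrix

section linfty

variable {ι κ : Type*} [Fintype ι] [Fintype κ]

theorem linfty_opNorm_eq_iSup (A : Matrix ι κ ℝ) : ‖A‖ = ⨆ i, ∑ j, |A i j| := by
  rw [linfty_opNorm_def, Finset.sup_univ_eq_ciSup, NNReal.coe_iSup]
  simp only [NNReal.coe_sum, coe_nnnorm, Real.norm_eq_abs]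

theorem abs_apply_le_linfty_opNorm (A : Matrix ι κ ℝ) (i : ι) (j : κ) : |A i j| ≤ ‖A‖ :=
  calc |A i j| ≤ ∑ k, |A i k| :=
        Finset.single_le_sum (fun k _ => abs_nonneg (A i k)) (Finset.mem_univ j)
    _ ≤ ‖A‖ := by
        rw [linfty_opNorm_eq_iSup]
        exact le_ciSup (f := fun i => ∑ k, |A i k|) (Set.finite_range _).bddAbove i

end linfty

variable {n : ℕ}

theorem infNorm_eq_linfty_opNorm (A : Matrix (Fin n) (Fin n) ℝ) : infNorm A = ‖A‖ :=
  (linfty_opNorm_eq_iSup A).symm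

theorem linfty_opNorm_aabs (A : Matrix (Fin n) (Fin n) ℝ) : ‖aabs A‖ = ‖A‖ := by
  simp only [linfty_opNorm_eq_iSup, aabs, of_apply, abs_abs]

end Matrix

open Matrix

section lprod

variable {n : ℕ}

theorem abs_lprod_apply_le (Φ : ℕ → Matrix (Fin n) (Fin n) ℝ) (t : ℕ) (i j : Fin n) :
    |lprod Φ t i j| ≤ lprod (fun s => aabs (Φ s)) t i j := by
  induction t generalizing i with
  | zero => by_cases h : i = j <;> simp [lprod, one_apply, h]
  | succ t ih =>
    simp only [lprod, mul_apply]
    refine (Finset.abs_sum_le_sum_abs _ _).trans (Finset.sum_le_sum fun k _ => ?_)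
    rw [abs_mul]
    exact mul_le_mul_of_nonneg_left (ih k) (abs_nonneg _)

theorem lprod_add (A : ℕ → Matrix (Fin n) (Fin n) ℝ) (a b : ℕ) :
    lprod A (a + b) = lprod (fun s => A (b + s)) a * lprod A b := by
  induction a with
  | zero => simp [lprod]
  | succ a ih =>
    rw [Nat.add_right_comm, lprod, ih, lprod, Nat.add_comm b a, Matrix.mul_assoc]

theorem lprod_mul_eq_lprod_blocks (A : ℕ → Matrix (Fin n) (Fin n) ℝ) (T γ : ℕ) :
    lprod A (γ * T) = lprod (fun g => lprod (fun s => A (g * T + s)) T) γ := by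
  induction γ with
  | zero => simp [lprod]
  | succ γ ih => rw [Nat.succ_mul, Nat.add_comm, lprod_add, ih, lprod]

theorem norm_lprod_le_pow (A : ℕ → Matrix (Fin n) (Fin n) ℝ) {c : ℝ} (hA : ∀ s, ‖A s‖ ≤ c)
    (t : ℕ) : ‖lprod A t‖ ≤ c ^ t := by
  induction t with
  | zero =>
    rw [lprod, pow_zero, ← diagonal_one, linfty_opNorm_diagonal]
    exact pi_norm_le_iff_of_nonneg zero_le_one |>.mpr fun _ => norm_one.le
  | succ t ih =>
    rw [lprod, pow_succ']
    exact (linfty_opNorm_mul _ _).trans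
      (mul_le_mul (hA t) ih (norm_nonneg _) ((norm_nonneg _).trans (hA 0)))

theorem norm_lprod_le_of_blocks (A : ℕ → Matrix (Fin n) (Fin n) ℝ) {c q : ℝ} {T : ℕ}
    (hT : 0 < T) (hc : 1 ≤ c) (hA : ∀ s, ‖A s‖ ≤ c)
    (hblock : ∀ γ, ‖lprod (fun s => A (γ * T + s)) T‖ ≤ q) (t : ℕ) :
    ‖lprod A t‖ ≤ c ^ T * q ^ (t / T) := by
  have hq : 0 ≤ q := (norm_nonneg _).trans (hblock 0)
  rw [← Nat.mod_add_div' t T, lprod_add, Nat.mod_add_div' t T, lprod_mul_eq_lprod_blocks]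
  calc _ ≤ ‖lprod (fun s => A (t / T * T + s)) (t % T)‖ * ‖lprod _ (t / T)‖ :=
        linfty_opNorm_mul _ _
    _ ≤ c ^ (t % T) * q ^ (t / T) :=
        mul_le_mul (norm_lprod_le_pow _ (fun s => hA _) _) (norm_lprod_le_pow _ hblock _)
          (norm_nonneg _) (by positivity)
    _ ≤ c ^ T * q ^ (t / T) :=
        mul_le_mul_of_nonneg_right (pow_le_pow_right₀ hc (Nat.mod_lt t hT).le) (by positivity)

end lprod

theorem superstochastic_infinite_product_zero_general {n : ℕ}
    (Φ : ℕ → Matrix (Fin n) (Fin n) ℝ) (σ l : ℝ)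
    (hl : 1 ≤ l)
    (hrows : ∀ t, ∀ i, ∑ j, |Φ t i j| ≤ l)
    (T : ℕ) (hT : 0 < T)
    (hblock : ∀ γ : ℕ,
      infNorm (lprod (fun s => aabs (Φ (γ * T + s))) T) ≤ l ^ T - σ ^ T)
    (hlt : l ^ T - σ ^ T < 1) :
    ∀ i j : Fin n, Tendsto (fun t => lprod Φ t i j) atTop (𝓝 0) := by
  intro i j
  simp only [infNorm_eq_linfty_opNorm] at hblock
  have hnorm : ∀ s, ‖aabs (Φ s)‖ ≤ l := fun s => by
    rw [linfty_opNorm_aabs, linfty_opNorm_eq_iSup]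
    exact Real.iSup_le (hrows s) (zero_le_one.trans hl)
  have hq : 0 ≤ l ^ T - σ ^ T := (norm_nonneg _).trans (hblock 0)
  have hbound := norm_lprod_le_of_blocks _ hT hl hnorm hblock
  have hlim : Tendsto (fun t => l ^ T * (l ^ T - σ ^ T) ^ (t / T)) atTop (𝓝 0) := by
    simpa using ((tendsto_pow_atTop_nhds_zero_of_lt_one hq hlt).comp
      (Nat.tendsto_div_const_atTop hT.ne')).const_mul (l ^ T)
  refine squeeze_zero_norm (fun t => ?_) hlim
  exact (abs_lprod_apply_le Φ t i j).trans
    ((le_abs_self _).trans ((abs_apply_le_linfty_opNorm _ i j).trans (hbound t)))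

/-- Suppose each `|Φ(t)|` is super-stochastic (some rows have
sum < 1, the others ≥ 1) with all row sums at most `l` and diagonal entries at
least `σ`, where `0 < σ ≤ 1 ≤ l`. If for a period `T` all blockwise products
of the `|Φ(t)|` satisfy `‖·‖_∞ ≤ l^T − σ^T < 1`, then the infinite left
product `Φ(t)⋯Φ(0)` converges entrywise to zero. -/
theorem superstochastic_infinite_product_zero {n : ℕ}
    (Φ : ℕ → Matrix (Fin n) (Fin n) ℝ) (σ l : ℝ)
    (hσ0 : 0 < σ) (hσ1 : σ ≤ 1) (hl : 1 ≤ l)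
    (hsuper : ∀ t, ∃ W : Finset (Fin n),
      (∀ i ∈ W, ∑ j, |Φ t i j| < 1) ∧ (∀ i ∉ W, 1 ≤ ∑ j, |Φ t i j|))
    (hrows : ∀ t, ∀ i, ∑ j, |Φ t i j| ≤ l)
    (hdiag : ∀ t, ∀ i, σ ≤ |Φ t i i|)
    (T : ℕ) (hT : 0 < T)
    (hblock : ∀ γ : ℕ,
      infNorm (lprod (fun s => aabs (Φ (γ * T + s))) T) ≤ l ^ T - σ ^ T)
    (hlt : l ^ T - σ ^ T < 1) :
    ∀ i j : Fin n, Tendsto (fun t => lprod Φ t i j) atTop (𝓝 0) :=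
  superstochastic_infinite_product_zero_general Φ σ l hl hrows T hT hblock hlt
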